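/- arXiv:2110.15334 — 3 statements merged into one kernel-verified Lean document; each statement's English description precedes it below -/
import Mathlib

section
/- For all subspaces M, N ⊆ ℂ^n, the gap equals the maximum of the two semigaps: ‖P_M − P_N‖ = max{ θ_0(M, N), θ_0(N, M) }. -/
open scoped Matrix
open scoped InnerProductSpace

/-- Operator norm on `n × n` complex matrices induced by the Euclidean norm on `ℂ^n`. -/
noncomputable def opNorm {n : ℕ} (A : Matrix (Fin n) (Fin n) ℂ) : ℝ :=
  ‖(Matrix.toEuclideanCLM (𝕜 := ℂ) A : EuclideanSpace ℂ (Fin n) →L[ℂ] EuclideanSpace ℂ (Fin n))‖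

/-- `A = U * T * Uᴴ` is a Schur factorization: `U` unitary, `T` upper triangular. -/
def IsSchurTriple {n : ℕ} (A U T : Matrix (Fin n) (Fin n) ℂ) : Prop :=
  U ∈ Matrix.unitaryGroup (Fin n) ℂ ∧ T.BlockTriangular id ∧ A = U * T * Uᴴ

/-- `dim ker (A - μ I)^j`. -/
noncomputable def kerDim {n : ℕ} (A : Matrix (Fin n) (Fin n) ℂ) (μ : ℂ) (j : ℕ) : ℕ :=
  Module.finrank ℂ (LinearMap.ker (Matrix.toLin' ((A - μ • 1) ^ j)))

/-- `m_i(A, μ)`, the `i`-th largest Jordan block size of `A` at `μ`: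
the number of `j ≥ 1` with `dim ker (A-μ)^j - dim ker (A-μ)^{j-1} ≥ i`
(all such `j` lie in `[1, n]`). -/
noncomputable def gkLocal {n : ℕ} (A : Matrix (Fin n) (Fin n) ℂ) (μ : ℂ) (i : ℕ) : ℕ :=
  ((Finset.Icc 1 n).filter (fun j => i ≤ kerDim A μ j - kerDim A μ (j - 1))).card

/-- The Gohberg–Kaashoek numbers `m_i(A) = Σ_{λ ∈ σ(A)} m_i(A, λ)`. -/
noncomputable def gkNumber {n : ℕ} (A : Matrix (Fin n) (Fin n) ℂ) (i : ℕ) : ℕ :=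
  ∑ μ ∈ A.charpoly.roots.toFinset, gkLocal A μ i

/-- `A` and `A0` have the same Jordan structure: a bijection `φ : σ(A0) → σ(A)` with
`dim ker (A - φ(λ))^k = dim ker (A0 - λ)^k` for all `λ ∈ σ(A0)`, `k ≥ 1`. -/
def SameJordanStructure {n : ℕ} (A A0 : Matrix (Fin n) (Fin n) ℂ) : Prop :=
  ∃ φ : ℂ → ℂ, Set.BijOn φ (spectrum ℂ A0) (spectrum ℂ A) ∧
    ∀ μ ∈ spectrum ℂ A0, ∀ k : ℕ, 1 ≤ k → kerDim A (φ μ) k = kerDim A0 μ k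

/-- `A` is non-derogatory: each eigenvalue has a one-dimensional eigenspace. -/
def NonDerogatory {n : ℕ} (A : Matrix (Fin n) (Fin n) ℂ) : Prop :=
  ∀ μ ∈ spectrum ℂ A, Module.finrank ℂ (LinearMap.ker (Matrix.toLin' (A - μ • 1))) = 1

/-- Orthogonal projection of `ℂ^n` onto the subspace `M`, as a map `ℂ^n → ℂ^n`. -/
noncomputable def projCLM {n : ℕ} (M : Submodule ℂ (EuclideanSpace ℂ (Fin n))) :
    EuclideanSpace ℂ (Fin n) →L[ℂ] EuclideanSpace ℂ (Fin n) :=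
  M.subtypeL.comp (M.orthogonalProjection)

/-- The gap `θ(M, N) = ‖P_M - P_N‖`. -/
noncomputable def gap {n : ℕ} (M N : Submodule ℂ (EuclideanSpace ℂ (Fin n))) : ℝ :=
  ‖projCLM M - projCLM N‖

/-- The semigap `θ₀(M, N) = sup_{x ∈ M, ‖x‖ = 1} inf_{y ∈ N} ‖x - y‖` (equal to `0` if
`M = {0}`, since `sSup ∅ = 0` in `ℝ`). -/
noncomputable def semigap {n : ℕ} (M N : Submodule ℂ (EuclideanSpace ℂ (Fin n))) : ℝ :=
  sSup ((fun x => Metric.infDist x (N : Set (EuclideanSpace ℂ (Fin n)))) ''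
    {x : EuclideanSpace ℂ (Fin n) | x ∈ M ∧ ‖x‖ = 1})


namespace GapAux
variable {n : ℕ} (M N : Submodule ℂ (EuclideanSpace ℂ (Fin n)))
variable {n : ℕ} (M N : Submodule ℂ (EuclideanSpace ℂ (Fin n)))

lemma projCLM_apply (x : EuclideanSpace ℂ (Fin n)) :
    projCLM M x = (M.orthogonalProjectionOnto x : EuclideanSpace ℂ (Fin n)) := rfl

lemma projCLM_norm_apply_le (x : EuclideanSpace ℂ (Fin n)) : ‖projCLM M x‖ ≤ ‖x‖ := by
  rw [projCLM_apply]
  have h := Submodule.norm_sq_eq_add_norm_sq_projection x M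
  have h2 : ‖(M.orthogonalProjectionOnto x : EuclideanSpace ℂ (Fin n))‖ = ‖M.orthogonalProjectionOnto x‖ := rfl
  nlinarith [norm_nonneg (Mᗮ.orthogonalProjectionOnto x), norm_nonneg x,
    norm_nonneg ((M.orthogonalProjectionOnto x : EuclideanSpace ℂ (Fin n)))]

lemma one_sub_projCLM : 1 - projCLM M = projCLM Mᗮ := by
  ext x
  simp [ContinuousLinearMap.sub_apply, projCLM_apply, Submodule.orthogonalProjectionOnto_orthogonal]

lemma projCLM_norm_le : ‖projCLM M‖ ≤ 1 := by
  refine ContinuousLinearMap.opNorm_le_bound _ zero_le_one (fun x => ?_)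
  rw [one_mul]; exact projCLM_norm_apply_le M x

lemma projCLM_idem : projCLM M * projCLM M = projCLM M := by
  ext x
  simp [ContinuousLinearMap.mul_apply, projCLM_apply, Submodule.orthogonalProjectionOnto_mem_subspace_eq_self,
    Submodule.starProjection_eq_self_iff.mpr (Submodule.starProjection_apply_mem M x)]

lemma projCLM_isSelfAdjoint : IsSelfAdjoint (projCLM M) :=
  isSelfAdjoint_starProjection M

lemma projCLM_mem (x : EuclideanSpace ℂ (Fin n)) : projCLM M x ∈ M :=
  (M.orthogonalProjectionOnto x).2

lemma pythagoras (x : EuclideanSpace ℂ (Fin n)) :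
    ‖x‖ ^ 2 = ‖projCLM M x‖ ^ 2 + ‖(1 - projCLM M) x‖ ^ 2 := by
  rw [one_sub_projCLM]
  simpa [projCLM_apply] using Submodule.norm_sq_eq_add_norm_sq_projection x M

lemma main (hMN : ‖(1 - projCLM N) * projCLM M‖ = aa) (hNM : ‖(1 - projCLM M) * projCLM N‖ = bb) :
    ‖projCLM M - projCLM N‖ = max aa bb := by
  subst hMN hNM
  set P := projCLM M with hPdef
  set Q := projCLM N with hQdef
  have hP : IsSelfAdjoint P := projCLM_isSelfAdjoint M
  have hQ : IsSelfAdjoint Q := projCLM_isSelfAdjoint N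
  have hPidem : P * P = P := projCLM_idem M
  have hQidem : Q * Q = Q := projCLM_idem N
  have hstar1 : ‖P * (1 - Q)‖ = ‖(1 - Q) * P‖ := by
    have h1Q : star (1 - Q) = 1 - Q := by
      have h1 : ContinuousLinearMap.adjoint
          (1 : EuclideanSpace ℂ (Fin n) →L[ℂ] EuclideanSpace ℂ (Fin n)) = 1 :=
        ContinuousLinearMap.adjoint_id
      rw [ContinuousLinearMap.star_eq_adjoint, map_sub, h1,
        ← ContinuousLinearMap.star_eq_adjoint, hQ.star_eq]
    have h : star ((1 - Q) * P) = P * (1 - Q) := by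
      rw [star_mul, hP.star_eq, h1Q]
    rw [ContinuousLinearMap.star_eq_adjoint] at h
    have h2 : ‖ContinuousLinearMap.adjoint ((1 - Q) * P)‖ = ‖(1 - Q) * P‖ :=
      LinearIsometryEquiv.norm_map _ _
    rw [h] at h2
    exact h2
  set a := ‖(1 - Q) * P‖ with ha
  set b := ‖(1 - P) * Q‖ with hb
  set m := max a b with hm
  have ham : a ≤ m := le_max_left _ _
  have hbm : b ≤ m := le_max_right _ _
  have hanon : 0 ≤ a := norm_nonneg _
  have hbnon : 0 ≤ b := norm_nonneg _
  have hmnon : 0 ≤ m := le_trans hanon ham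
  refine le_antisymm ?_ ?_
  · refine ContinuousLinearMap.opNorm_le_bound _ hmnon (fun x => ?_)
    set u := (1 - Q) x with hu
    set v := Q x with hv
    have hdecomp : (P - Q) x = P u - (1 - P) v := by
      simp only [hu, hv, ContinuousLinearMap.sub_apply, ContinuousLinearMap.one_apply, map_sub]
      abel
    have hvmem : (1 - P) v ∈ Mᗮ := by
      have : (1 - P) v = v - (M.orthogonalProjectionOnto v : EuclideanSpace ℂ (Fin n)) := rfl
      rw [this]
      exact Submodule.sub_starProjection_mem_orthogonal v
    have horth : ⟪P u, -((1 - P) v)⟫_ℂ = 0 := by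
      rw [inner_neg_right]
      rw [neg_eq_zero]
      exact hvmem (P u) (projCLM_mem M u)
    have hpyth1 : ‖(P - Q) x‖ ^ 2 = ‖P u‖ ^ 2 + ‖(1 - P) v‖ ^ 2 := by
      rw [hdecomp, sub_eq_add_neg]
      have := norm_add_sq_eq_norm_sq_add_norm_sq_of_inner_eq_zero (P u) (-((1 - P) v)) horth
      rw [norm_neg] at this
      simpa [pow_two] using this
    have hQu : (1 - Q) u = u := by
      have h0 : (1 - Q) * (1 - Q) = 1 - Q := by
        rw [sub_mul, one_mul, mul_sub, mul_one, hQidem, sub_self, sub_zero]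
      have : ((1 - Q) * (1 - Q)) x = (1 - Q) x := by rw [h0]
      simpa [hu, ContinuousLinearMap.mul_apply] using this
    have hQv : Q v = v := by
      have : (Q * Q) x = Q x := by rw [hQidem]
      simpa [hv, ContinuousLinearMap.mul_apply] using this
    have e1 : ‖P u‖ ≤ a * ‖u‖ := by
      calc ‖P u‖ = ‖(P * (1 - Q)) u‖ := by rw [ContinuousLinearMap.mul_apply, hQu]
        _ ≤ ‖P * (1 - Q)‖ * ‖u‖ := ContinuousLinearMap.le_opNorm _ _
        _ = a * ‖u‖ := by rw [hstar1]
    have e2 : ‖(1 - P) v‖ ≤ b * ‖v‖ := by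
      calc ‖(1 - P) v‖ = ‖((1 - P) * Q) v‖ := by rw [ContinuousLinearMap.mul_apply, hQv]
        _ ≤ b * ‖v‖ := ContinuousLinearMap.le_opNorm _ _
    have hpythx : ‖x‖ ^ 2 = ‖v‖ ^ 2 + ‖u‖ ^ 2 := pythagoras N x
    have hPu := norm_nonneg (P u)
    have hPv := norm_nonneg ((1 - P) v)
    have hnu := norm_nonneg u
    have hnv := norm_nonneg v
    have e1' : ‖P u‖ ≤ m * ‖u‖ :=
      le_trans e1 (mul_le_mul_of_nonneg_right ham hnu)
    have e2' : ‖(1 - P) v‖ ≤ m * ‖v‖ :=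
      le_trans e2 (mul_le_mul_of_nonneg_right hbm hnv)
    have h1 : ‖P u‖ ^ 2 ≤ m ^ 2 * ‖u‖ ^ 2 := by
      rw [← mul_pow]; exact pow_le_pow_left₀ hPu e1' 2
    have h2 : ‖(1 - P) v‖ ^ 2 ≤ m ^ 2 * ‖v‖ ^ 2 := by
      rw [← mul_pow]; exact pow_le_pow_left₀ hPv e2' 2
    have hsq : ‖(P - Q) x‖ ^ 2 ≤ (m * ‖x‖) ^ 2 := by
      calc ‖(P - Q) x‖ ^ 2 = ‖P u‖ ^ 2 + ‖(1 - P) v‖ ^ 2 := hpyth1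
        _ ≤ m ^ 2 * ‖u‖ ^ 2 + m ^ 2 * ‖v‖ ^ 2 := add_le_add h1 h2
        _ = m ^ 2 * (‖v‖ ^ 2 + ‖u‖ ^ 2) := by ring
        _ = (m * ‖x‖) ^ 2 := by rw [← hpythx]; ring
    have hfin := Real.sqrt_le_sqrt hsq
    rw [Real.sqrt_sq (norm_nonneg _), Real.sqrt_sq (mul_nonneg hmnon (norm_nonneg x))] at hfin
    exact hfin
  · rw [max_le_iff]
    constructor
    · have heq : (1 - Q) * P = (1 - Q) * (P - Q) := by
        have h0 : (1 - Q) * Q = 0 := by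
          rw [sub_mul, one_mul, hQidem, sub_self]
        rw [mul_sub, h0, sub_zero]
      calc a = ‖(1 - Q) * (P - Q)‖ := by rw [ha, heq]
        _ ≤ ‖1 - Q‖ * ‖P - Q‖ := norm_mul_le _ _
        _ ≤ 1 * ‖P - Q‖ := by
            refine mul_le_mul_of_nonneg_right ?_ (norm_nonneg _)
            rw [hQdef, one_sub_projCLM]; exact projCLM_norm_le Nᗮ
        _ = ‖P - Q‖ := one_mul _
    · have heq : (1 - P) * Q = (1 - P) * (Q - P) := by
        have h0 : (1 - P) * P = 0 := by
          rw [sub_mul, one_mul, hPidem, sub_self]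
        rw [mul_sub, h0, sub_zero]
      calc b = ‖(1 - P) * (Q - P)‖ := by rw [hb, heq]
        _ ≤ ‖1 - P‖ * ‖Q - P‖ := norm_mul_le _ _
        _ ≤ 1 * ‖Q - P‖ := by
            refine mul_le_mul_of_nonneg_right ?_ (norm_nonneg _)
            rw [hPdef, one_sub_projCLM]; exact projCLM_norm_le Mᗮ
        _ = ‖P - Q‖ := by rw [one_mul, ← neg_sub, norm_neg]


lemma projCLM_eq_self {x : EuclideanSpace ℂ (Fin n)} (hx : x ∈ M) : projCLM M x = x := by
  simpa [projCLM_apply] using congrArg Subtype.val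
    (Submodule.orthogonalProjectionOnto_mem_subspace_eq_self (K := M) ⟨x, hx⟩)

lemma infDist_eq (x : EuclideanSpace ℂ (Fin n)) :
    Metric.infDist x (N : Set (EuclideanSpace ℂ (Fin n))) = ‖(1 - projCLM N) x‖ := by
  rw [Metric.infDist_eq_iInf]
  simp only [ContinuousLinearMap.sub_apply, ContinuousLinearMap.one_apply, projCLM_apply]
  rw [Submodule.coe_orthogonalProjectionOnto_apply, Submodule.starProjection_minimal x]
  congr 1
  exact funext fun y => dist_eq_norm _ _

lemma semigap_eq : semigap M N = ‖(1 - projCLM N) * projCLM M‖ := by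
  set T := (1 - projCLM N) * projCLM M with hT
  set S := ((fun x => Metric.infDist x (N : Set (EuclideanSpace ℂ (Fin n)))) ''
    {x : EuclideanSpace ℂ (Fin n) | x ∈ M ∧ ‖x‖ = 1}) with hS
  have hmemle : ∀ a ∈ S, a ≤ ‖T‖ := by
    rintro a ⟨x, ⟨hxM, hx1⟩, rfl⟩
    show Metric.infDist x (N : Set (EuclideanSpace ℂ (Fin n))) ≤ ‖T‖
    rw [infDist_eq]
    have : (1 - projCLM N) x = T x := by
      rw [hT, ContinuousLinearMap.mul_apply, projCLM_eq_self M hxM]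
    rw [this]
    calc ‖T x‖ ≤ ‖T‖ * ‖x‖ := T.le_opNorm x
    _ = ‖T‖ := by rw [hx1, mul_one]
  have hbdd : BddAbove S := ⟨‖T‖, hmemle⟩
  have hSnonneg : 0 ≤ sSup S := by
    rcases Set.eq_empty_or_nonempty S with h | ⟨a, ha⟩
    · rw [h, Real.sSup_empty]
    · refine le_trans ?_ (le_csSup hbdd ha)
      obtain ⟨x, _, rfl⟩ := ha
      exact Metric.infDist_nonneg
  refine le_antisymm (Real.sSup_le hmemle (norm_nonneg _)) ?_
  refine ContinuousLinearMap.opNorm_le_bound _ hSnonneg (fun x => ?_)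
  by_cases hp : projCLM M x = 0
  · rw [hT, ContinuousLinearMap.mul_apply, hp, map_zero, norm_zero]
    positivity
  · set c := ‖projCLM M x‖ with hc
    have hcpos : 0 < c := norm_pos_iff.mpr hp
    set u := (c : ℂ)⁻¹ • projCLM M x with hu
    have huM : u ∈ M := M.smul_mem _ (projCLM_mem M x)
    have hu1 : ‖u‖ = 1 := by
      rw [hu, norm_smul]
      simp [hc, norm_inv, hcpos.ne', inv_mul_cancel₀ (norm_ne_zero_iff.mpr hp)]
    have humem : ‖(1 - projCLM N) u‖ ∈ S := by
      exact ⟨u, ⟨huM, hu1⟩, infDist_eq N u⟩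
    have hTx : ‖T x‖ = c * ‖(1 - projCLM N) u‖ := by
      rw [hT, ContinuousLinearMap.mul_apply]
      have : projCLM M x = (c : ℂ) • u := by
        rw [hu, smul_smul]
        rw [mul_inv_cancel₀ (by exact_mod_cast hcpos.ne'), one_smul]
      rw [this, map_smul, norm_smul]
      simp [hcpos.le]
    rw [hTx]
    calc c * ‖(1 - projCLM N) u‖ ≤ ‖x‖ * sSup S := by
          apply mul_le_mul (projCLM_norm_apply_le M x) (le_csSup hbdd humem)
            (norm_nonneg _) (norm_nonneg _)
      _ = sSup S * ‖x‖ := mul_comm _ _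


end GapAux

/-- the gap is the maximum of the two semigaps. -/
theorem gap_eq_max_semigaps {n : ℕ} (M N : Submodule ℂ (EuclideanSpace ℂ (Fin n))) :
    gap M N = max (semigap M N) (semigap N M) := by
  rw [gap, GapAux.semigap_eq M N, GapAux.semigap_eq N M]
  exact GapAux.main M N rfl rfl
end

section
/- Let A0 ∈ ℂ^{n×n}. Then there exist constants ε, K > 0, depending on A0 only, such that for every A ∈ ℂ^{n×n} with ‖A − A0‖ < ε one has θ_0(ker A, ker A0) ≤ K ‖A − A0‖. -/
open scoped Matrix

set_option maxHeartbeats 1000000 in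
/-- Lipschitz bound for the semigap between kernels. -/
theorem semigap_ker_le {n : ℕ} (A0 : Matrix (Fin n) (Fin n) ℂ) :
    ∃ ε > (0 : ℝ), ∃ K > (0 : ℝ), ∀ A : Matrix (Fin n) (Fin n) ℂ,
      opNorm (A - A0) < ε →
      semigap (LinearMap.ker (Matrix.toEuclideanLin A))
          (LinearMap.ker (Matrix.toEuclideanLin A0)) ≤ K * opNorm (A - A0) := by
  classical
  set T0 : EuclideanSpace ℂ (Fin n) →L[ℂ] EuclideanSpace ℂ (Fin n) :=
    Matrix.toEuclideanCLM (𝕜 := ℂ) A0 with hT0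
  set N : Submodule ℂ (EuclideanSpace ℂ (Fin n)) := LinearMap.ker (Matrix.toEuclideanLin A0)
    with hN
  have hker : ∀ v : EuclideanSpace ℂ (Fin n), v ∈ N ↔ T0 v = 0 := fun v => Iff.rfl
  obtain ⟨c, hc, hbound⟩ : ∃ c > (0:ℝ), ∀ v ∈ Nᗮ, c * ‖v‖ ≤ ‖T0 v‖ := by
    by_cases hW : Nᗮ = ⊥
    · refine ⟨1, one_pos, fun v hv => ?_⟩
      rw [hW, Submodule.mem_bot] at hv
      simp [hv]
    · obtain ⟨v0, hv0W, hv0⟩ := Submodule.exists_mem_ne_zero_of_ne_bot hW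
      have hScomp : IsCompact ((Nᗮ : Set (EuclideanSpace ℂ (Fin n))) ∩ Metric.sphere 0 1) :=
        (isCompact_sphere (0 : EuclideanSpace ℂ (Fin n)) 1).inter_left
          (Submodule.closed_of_finiteDimensional Nᗮ)
      have hSne : ((Nᗮ : Set (EuclideanSpace ℂ (Fin n))) ∩ Metric.sphere 0 1).Nonempty := by
        refine ⟨‖v0‖⁻¹ • v0, Submodule.smul_of_tower_mem _ _ hv0W, ?_⟩
        simp [norm_smul, norm_ne_zero_iff.mpr hv0, inv_mul_cancel₀ (norm_ne_zero_iff.mpr hv0)]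
      obtain ⟨v1, hv1, hmin⟩ := hScomp.exists_isMinOn hSne
        (Continuous.continuousOn (by continuity : Continuous fun v => ‖T0 v‖))
      have hv1norm : ‖v1‖ = 1 := by simpa using hv1.2
      have hc1 : 0 < ‖T0 v1‖ := by
        rw [norm_pos_iff]
        intro h
        have hv1N : v1 ∈ N := (hker v1).mpr h
        have : v1 ∈ N ⊓ Nᗮ := ⟨hv1N, hv1.1⟩
        rw [Submodule.inf_orthogonal_eq_bot, Submodule.mem_bot] at this
        rw [this] at hv1norm
        simp at hv1norm
      refine ⟨‖T0 v1‖, hc1, fun v hv => ?_⟩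
      rcases eq_or_ne v 0 with rfl | hvne
      · simp
      · have hvn : (0:ℝ) < ‖v‖ := norm_pos_iff.mpr hvne
        have hmem : ((‖v‖⁻¹ : ℝ) : ℂ) • v ∈
            (Nᗮ : Set (EuclideanSpace ℂ (Fin n))) ∩ Metric.sphere 0 1 := by
          refine ⟨Submodule.smul_mem _ _ hv, ?_⟩
          simp [norm_smul, abs_of_nonneg (norm_nonneg v), inv_mul_cancel₀ hvn.ne']
        have h2 : ‖T0 v1‖ ≤ ‖T0 (((‖v‖⁻¹ : ℝ) : ℂ) • v)‖ := hmin hmem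
        rw [map_smul, norm_smul] at h2
        simp only [Complex.norm_real, Real.norm_eq_abs,
          abs_of_nonneg (inv_nonneg.mpr (norm_nonneg v))] at h2
        rw [inv_mul_eq_div, le_div_iff₀ hvn] at h2
        exact h2
  refine ⟨1, one_pos, c⁻¹, inv_pos.mpr hc, fun A hA => ?_⟩
  set T : EuclideanSpace ℂ (Fin n) →L[ℂ] EuclideanSpace ℂ (Fin n) :=
    Matrix.toEuclideanCLM (𝕜 := ℂ) A with hT
  have hTsub : (Matrix.toEuclideanCLM (𝕜 := ℂ) (A - A0) :
      EuclideanSpace ℂ (Fin n) →L[ℂ] EuclideanSpace ℂ (Fin n)) = T - T0 := map_sub _ _ _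
  have hop : opNorm (A - A0) = ‖T - T0‖ := by rw [opNorm, hTsub]
  rw [semigap]
  refine Real.sSup_le ?_ (mul_nonneg (inv_pos.mpr hc).le (hop ▸ norm_nonneg _))
  rintro z ⟨x, ⟨hxA, hx1⟩, rfl⟩
  have hxT : T x = 0 := hxA
  set u : EuclideanSpace ℂ (Fin n) := (N.orthogonalProjection x : EuclideanSpace ℂ (Fin n))
    with hu
  have huN : u ∈ N := (N.orthogonalProjection x).2
  have hvW : x - u ∈ Nᗮ := N.sub_starProjection_mem_orthogonal x
  have hT0u : T0 u = 0 := (hker u).mp huN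
  have key : c * ‖x - u‖ ≤ opNorm (A - A0) := by
    calc c * ‖x - u‖ ≤ ‖T0 (x - u)‖ := hbound _ hvW
      _ = ‖(T0 - T) x‖ := by
          rw [map_sub, hT0u, sub_zero, ContinuousLinearMap.sub_apply, hxT, sub_zero]
      _ ≤ ‖T0 - T‖ * ‖x‖ := (T0 - T).le_opNorm x
      _ = opNorm (A - A0) := by rw [hx1, mul_one, hop, norm_sub_rev]
  calc Metric.infDist x (N : Set (EuclideanSpace ℂ (Fin n))) ≤ dist x u :=
        Metric.infDist_le_dist_of_mem huN
    _ = ‖x - u‖ := dist_eq_norm x u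
    _ ≤ c⁻¹ * opNorm (A - A0) := by
        rw [le_inv_mul_iff₀ hc]
        exact key
end

section
/- Let S0 ∈ ℂ^{n×n} be invertible with a QR decomposition S0 = Q0 R0, where Q0 is unitary and R0 is upper triangular. Then there exist constants K, ε > 0, depending on S0, Q0, R0 only, such that for every S ∈ ℂ^{n×n} with ‖S − S0‖ < ε there exist a unitary Q and an upper triangular R with S = Q R and ‖Q − Q0‖ + ‖R − R0‖ ≤ K ‖S − S0‖. -/
set_option maxHeartbeats 1000000


open scoped Matrix

open scoped Matrix
open scoped Matrix.Norms.L2Operator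

namespace QRStabAux

variable {n : ℕ}

/-- Triangular part: strict upper part plus half the diagonal. -/
noncomputable def trProj (n : ℕ) : Matrix (Fin n) (Fin n) ℂ →ₗ[ℂ] Matrix (Fin n) (Fin n) ℂ where
  toFun H := Matrix.of fun i j => if i < j then H i j else if i = j then H i j / 2 else 0
  map_add' A B := by
    ext i j
    simp only [Matrix.of_apply, Matrix.add_apply]
    split_ifs <;> ring
  map_smul' c A := by
    ext i j
    simp only [Matrix.of_apply, Matrix.smul_apply, RingHom.id_apply, smul_eq_mul]
    split_ifs <;> ring

lemma trProj_blockTriangular (H : Matrix (Fin n) (Fin n) ℂ) :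
    (trProj n H).BlockTriangular id := by
  intro i j hji
  have h1 : ¬ i < j := asymm hji
  have h2 : i ≠ j := (ne_of_gt hji)
  simp [trProj, h1, h2]

lemma trProj_add_conjTranspose (H : Matrix (Fin n) (Fin n) ℂ) (hH : Hᴴ = H) :
    (trProj n H)ᴴ + trProj n H = H := by
  ext i j
  have hji : (starRingEnd ℂ) (H j i) = H i j := congrFun (congrFun hH i) j
  rcases lt_trichotomy i j with h | h | h
  · have h' : ¬ j < i := asymm h
    have h'' : j ≠ i := fun e => absurd (e ▸ h) (lt_irrefl j)
    simp [trProj, Matrix.conjTranspose_apply, h, h', h'']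
  · subst h
    have hii : (starRingEnd ℂ) (H i i) = H i i := hji
    simp only [Matrix.add_apply, Matrix.conjTranspose_apply, trProj, LinearMap.coe_mk,
      AddHom.coe_mk, Matrix.of_apply, lt_irrefl, if_false, if_pos rfl]
    simp only [if_true]
    rw [show star (H i i / 2) = star (H i i) / 2 from by
      simp [star_div₀]]
    rw [show (star (H i i) : ℂ) = (starRingEnd ℂ) (H i i) from rfl, hii]
    ring
  · have h' : ¬ i < j := asymm h
    have h'' : i ≠ j := (ne_of_gt h).symm.symm
    simp only [Matrix.add_apply, Matrix.conjTranspose_apply, trProj, LinearMap.coe_mk,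
      AddHom.coe_mk, Matrix.of_apply, h, h', h'', if_true, if_false]
    rw [show (star (H j i) : ℂ) = (starRingEnd ℂ) (H j i) from rfl, hji]
    ring

/-- the entry linear map -/
def entryLM (i j : Fin n) : Matrix (Fin n) (Fin n) ℂ →ₗ[ℂ] ℂ where
  toFun X := X i j
  map_add' _ _ := rfl
  map_smul' _ _ := rfl

lemma isClosed_blockTriangular :
    IsClosed {X : Matrix (Fin n) (Fin n) ℂ | X.BlockTriangular id} := by
  have heq : {X : Matrix (Fin n) (Fin n) ℂ | X.BlockTriangular id} =
      ⋂ (i : Fin n), ⋂ (j : Fin n), ⋂ (_ : j < i), {X : Matrix (Fin n) (Fin n) ℂ | X i j = 0} := by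
    ext X
    simp only [Set.mem_iInter, Set.mem_setOf_eq]
    exact ⟨fun hX i j hji => hX hji, fun hX i j hji => hX i j hji⟩
  rw [heq]
  refine isClosed_iInter fun i => isClosed_iInter fun j => isClosed_iInter fun _ => ?_
  have hc : Continuous fun X : Matrix (Fin n) (Fin n) ℂ => X i j :=
    (entryLM i j).continuous_of_finiteDimensional
  exact isClosed_eq hc continuous_const


lemma cholesky_near_one (n : ℕ) :
    ∃ c : ℝ, 1 ≤ c ∧ ∀ H : Matrix (Fin n) (Fin n) ℂ, Hᴴ = H → ‖H‖ ≤ 1 / (8 * c ^ 2) →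
      ∃ X : Matrix (Fin n) (Fin n) ℂ, X.BlockTriangular id ∧ ‖X‖ ≤ 2 * c * ‖H‖ ∧
        (1 + X)ᴴ * (1 + X) = 1 + H := by
  set c : ℝ := ‖LinearMap.toContinuousLinearMap (trProj n)‖ + 1 with hc_def
  have hc1 : 1 ≤ c := le_add_of_nonneg_left (ContinuousLinearMap.opNorm_nonneg _)
  have hc0 : 0 < c := lt_of_lt_of_le one_pos hc1
  have hP : ∀ H : Matrix (Fin n) (Fin n) ℂ, ‖trProj n H‖ ≤ c * ‖H‖ := by
    intro H
    calc ‖trProj n H‖ = ‖LinearMap.toContinuousLinearMap (trProj n) H‖ := rfl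
      _ ≤ ‖LinearMap.toContinuousLinearMap (trProj n)‖ * ‖H‖ :=
          (LinearMap.toContinuousLinearMap (trProj n)).le_opNorm H
      _ ≤ c * ‖H‖ := by
          have := norm_nonneg H
          nlinarith [ContinuousLinearMap.opNorm_nonneg (LinearMap.toContinuousLinearMap (trProj n))]
  refine ⟨c, hc1, ?_⟩
  intro H hH hsmall
  have hδ0 : (0:ℝ) ≤ ‖H‖ := norm_nonneg H
  set r : ℝ := 2 * c * ‖H‖ with hr_def
  have hr0 : 0 ≤ r := by positivity
  have h8 : ‖H‖ * (8 * c ^ 2) ≤ 1 := (le_div_iff₀ (by positivity)).1 hsmall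
  have hrc : r ≤ 1 / (4 * c) := by
    rw [hr_def, le_div_iff₀ (by positivity)]
    nlinarith
  set Ω : Set (Matrix (Fin n) (Fin n) ℂ) := {X | X.BlockTriangular id ∧ ‖X‖ ≤ r} with hΩ_def
  set Φ : Matrix (Fin n) (Fin n) ℂ → Matrix (Fin n) (Fin n) ℂ :=
    fun X => trProj n (H - Xᴴ * X) with hΦ_def
  have hmaps : ∀ X ∈ Ω, Φ X ∈ Ω := by
    rintro X ⟨-, hXr⟩
    refine ⟨trProj_blockTriangular _, ?_⟩
    have hrr : r * r ≤ ‖H‖ := by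
      calc r * r ≤ (1 / (4 * c)) * (2 * c * ‖H‖) :=
            mul_le_mul hrc (le_of_eq hr_def) hr0 (by positivity)
        _ = ‖H‖ / 2 := by field_simp; ring
        _ ≤ ‖H‖ := by linarith
    have h1 : ‖H - Xᴴ * X‖ ≤ ‖H‖ + r * r := by
      calc ‖H - Xᴴ * X‖ ≤ ‖H‖ + ‖Xᴴ * X‖ := norm_sub_le _ _
        _ ≤ ‖H‖ + ‖Xᴴ‖ * ‖X‖ := by linarith [norm_mul_le Xᴴ X]
        _ ≤ ‖H‖ + r * r := by
            rw [Matrix.l2_opNorm_conjTranspose]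
            nlinarith [norm_nonneg X]
    calc ‖Φ X‖ ≤ c * ‖H - Xᴴ * X‖ := hP _
      _ ≤ c * (‖H‖ + r * r) := by nlinarith
      _ ≤ c * (2 * ‖H‖) := by nlinarith
      _ = r := by rw [hr_def]; ring
  have hlip : ∀ X ∈ Ω, ∀ Y ∈ Ω, ‖Φ X - Φ Y‖ ≤ (1/2 : ℝ) * ‖X - Y‖ := by
    rintro X ⟨-, hX⟩ Y ⟨-, hY⟩
    have e1 : Φ X - Φ Y = trProj n (Yᴴ * Y - Xᴴ * X) := by
      rw [hΦ_def]; rw [← map_sub]; congr 1; abel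
    have e2 : Yᴴ * Y - Xᴴ * X = Yᴴ * (Y - X) + (Y - X)ᴴ * X := by
      rw [Matrix.conjTranspose_sub]; noncomm_ring
    have hb : ‖Yᴴ * Y - Xᴴ * X‖ ≤ 2 * r * ‖X - Y‖ := by
      rw [e2]
      have n1 : ‖Yᴴ * (Y - X)‖ ≤ ‖Y‖ * ‖X - Y‖ := by
        calc ‖Yᴴ * (Y - X)‖ ≤ ‖Yᴴ‖ * ‖Y - X‖ := norm_mul_le _ _
          _ = ‖Y‖ * ‖X - Y‖ := by rw [Matrix.l2_opNorm_conjTranspose, norm_sub_rev]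
      have n2 : ‖(Y - X)ᴴ * X‖ ≤ ‖X - Y‖ * ‖X‖ := by
        calc ‖(Y - X)ᴴ * X‖ ≤ ‖(Y - X)ᴴ‖ * ‖X‖ := norm_mul_le _ _
          _ = ‖X - Y‖ * ‖X‖ := by rw [Matrix.l2_opNorm_conjTranspose, norm_sub_rev]
      calc ‖Yᴴ * (Y - X) + (Y - X)ᴴ * X‖ ≤ ‖Yᴴ * (Y - X)‖ + ‖(Y - X)ᴴ * X‖ := norm_add_le _ _
        _ ≤ ‖Y‖ * ‖X - Y‖ + ‖X - Y‖ * ‖X‖ := by linarith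
        _ ≤ 2 * r * ‖X - Y‖ := by nlinarith [norm_nonneg (X - Y), norm_nonneg X, norm_nonneg Y]
    have hcr : c * (2 * r) ≤ 1/2 := by
      rw [hr_def]
      have h8' : ‖H‖ * (8 * c ^ 2) / 2 ≤ 1 / 2 := by
        apply div_le_div_of_nonneg_right h8
        norm_num
      calc c * (2 * (2 * c * ‖H‖)) = (‖H‖ * (8 * c ^ 2)) / 2 := by ring
        _ ≤ 1/2 := h8'
    calc ‖Φ X - Φ Y‖ = ‖trProj n (Yᴴ * Y - Xᴴ * X)‖ := by rw [e1]
      _ ≤ c * ‖Yᴴ * Y - Xᴴ * X‖ := hP _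
      _ ≤ c * (2 * r * ‖X - Y‖) := by nlinarith [norm_nonneg (Yᴴ * Y - Xᴴ * X)]
      _ ≤ (1/2 : ℝ) * ‖X - Y‖ := by nlinarith [norm_nonneg (X - Y)]
  have hzero : (0 : Matrix (Fin n) (Fin n) ℂ) ∈ Ω :=
    ⟨Matrix.blockTriangular_zero, by simpa using hr0⟩
  have hclosed : IsClosed Ω := by
    have : Ω = {X : Matrix (Fin n) (Fin n) ℂ | X.BlockTriangular id} ∩
        {X : Matrix (Fin n) (Fin n) ℂ | ‖X‖ ≤ r} := rfl
    rw [this]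
    exact isClosed_blockTriangular.inter (isClosed_le continuous_norm continuous_const)
  haveI : CompleteSpace Ω := hclosed.completeSpace_coe
  haveI : Nonempty Ω := ⟨⟨0, hzero⟩⟩
  set φ : Ω → Ω := fun x => ⟨Φ x, hmaps x x.2⟩ with hφ_def
  have hcontr : ContractingWith (1/2 : NNReal) φ := by
    constructor
    · rw [← NNReal.coe_lt_coe]; norm_num
    · apply LipschitzWith.of_dist_le_mul
      intro x y
      rw [Subtype.dist_eq, Subtype.dist_eq, dist_eq_norm, dist_eq_norm]
      have : ((1/2 : NNReal) : ℝ) = (1/2 : ℝ) := by norm_num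
      rw [this]
      exact hlip x x.2 y y.2
  set x := ContractingWith.fixedPoint φ hcontr with hx_def
  have hfix : φ x = x := hcontr.fixedPoint_isFixedPt
  obtain ⟨X, hXmem⟩ := x
  have hXfix : Φ X = X := congrArg Subtype.val hfix
  refine ⟨X, hXmem.1, hXmem.2, ?_⟩
  have hherm : (H - Xᴴ * X)ᴴ = H - Xᴴ * X := by
    rw [Matrix.conjTranspose_sub, Matrix.conjTranspose_mul, Matrix.conjTranspose_conjTranspose, hH]
  have hsum := trProj_add_conjTranspose _ hherm
  have hXfix' : trProj n (H - Xᴴ * X) = X := hXfix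
  rw [hXfix'] at hsum
  have expand : (1 + X)ᴴ * (1 + X) = 1 + (Xᴴ + X) + Xᴴ * X := by
    rw [Matrix.conjTranspose_add, Matrix.conjTranspose_one]
    noncomm_ring
  rw [expand, hsum]
  abel

lemma opNorm_eq {n : ℕ} (A : Matrix (Fin n) (Fin n) ℂ) : opNorm A = ‖A‖ := rfl

end QRStabAux


/-- Lipschitz stability of the QR decomposition of an invertible matrix. -/
theorem qr_decomposition_lipschitz_stable {n : ℕ}
    (S0 Q0 R0 : Matrix (Fin n) (Fin n) ℂ) (hS0 : IsUnit S0.det)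
    (hQ0 : Q0 ∈ Matrix.unitaryGroup (Fin n) ℂ) (hR0 : R0.BlockTriangular id)
    (hQR : S0 = Q0 * R0) :
    ∃ K > (0 : ℝ), ∃ ε > (0 : ℝ), ∀ S : Matrix (Fin n) (Fin n) ℂ,
      opNorm (S - S0) < ε →
      ∃ Q R : Matrix (Fin n) (Fin n) ℂ,
        Q ∈ Matrix.unitaryGroup (Fin n) ℂ ∧ R.BlockTriangular id ∧ S = Q * R ∧
        opNorm (Q - Q0) + opNorm (R - R0) ≤ K * opNorm (S - S0) := by
  classical
  obtain ⟨c, hc1, hchol⟩ := QRStabAux.cholesky_near_one n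
  have hc0 : (0:ℝ) < c := lt_of_lt_of_le one_pos hc1
  have hR0det : IsUnit R0.det := by
    have h := hS0
    rw [hQR, Matrix.det_mul] at h
    exact isUnit_of_mul_isUnit_right h
  have hR0inv' : R0⁻¹ * R0 = 1 := Matrix.nonsing_inv_mul R0 hR0det
  have hQ0u : Q0ᴴ * Q0 = 1 := by
    have h := Matrix.mem_unitaryGroup_iff'.mp hQ0
    rwa [Matrix.star_eq_conjTranspose] at h
  have hQ0u' : Q0 * Q0ᴴ = 1 := by
    have h := Matrix.mem_unitaryGroup_iff.mp hQ0
    rwa [Matrix.star_eq_conjTranspose] at h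
  obtain ⟨a, ha_def⟩ : ∃ a : ℝ, a = ‖Q0ᴴ‖ * ‖R0⁻¹‖ + 1 := ⟨_, rfl⟩
  have ha1 : 1 ≤ a := ha_def ▸ le_add_of_nonneg_left (by positivity)
  have ha0 : 0 < a := by linarith
  refine ⟨(2*a + 12*c*a) * ‖Q0‖ + 6*c*a*‖R0‖ + 1, by positivity,
    1/(24*c^2*a), by positivity, ?_⟩
  intro S hS
  rw [QRStabAux.opNorm_eq] at hS
  simp only [QRStabAux.opNorm_eq]
  obtain ⟨η, hη_def⟩ : ∃ e : ℝ, e = ‖S - S0‖ := ⟨_, rfl⟩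
  rw [← hη_def] at hS ⊢
  have hη0 : 0 ≤ η := hη_def ▸ norm_nonneg _
  obtain ⟨G, hG_def⟩ : ∃ G, G = Q0ᴴ * (S - S0) * R0⁻¹ := ⟨_, rfl⟩
  have hGnorm : ‖G‖ ≤ a * η := by
    rw [hG_def, ha_def, hη_def]
    calc ‖Q0ᴴ * (S - S0) * R0⁻¹‖ ≤ ‖Q0ᴴ * (S - S0)‖ * ‖R0⁻¹‖ := norm_mul_le _ _
      _ ≤ ‖Q0ᴴ‖ * ‖S - S0‖ * ‖R0⁻¹‖ := by
          have h := norm_mul_le Q0ᴴ (S - S0)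
          nlinarith [norm_nonneg (R0⁻¹), norm_nonneg (S - S0)]
      _ ≤ (‖Q0ᴴ‖ * ‖R0⁻¹‖ + 1) * ‖S - S0‖ := by
          nlinarith [norm_nonneg Q0ᴴ, norm_nonneg (R0⁻¹), norm_nonneg (S - S0)]
  have haη : a * η ≤ 1/(24*c^2) := by
    rw [lt_div_iff₀ (by positivity)] at hS
    rw [le_div_iff₀ (by positivity)]
    nlinarith
  have hSdecomp : Q0 * (1 + G) * R0 = S := by
    have h1 : Q0 * G * R0 = (Q0 * Q0ᴴ) * ((S - S0) * (R0⁻¹ * R0)) := by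
      rw [hG_def]; noncomm_ring
    rw [hQ0u', hR0inv', one_mul, mul_one] at h1
    have h2 : Q0 * (1 + G) * R0 = Q0 * R0 + Q0 * G * R0 := by noncomm_ring
    rw [h2, h1, ← hQR]
    abel
  obtain ⟨H, hH_def⟩ : ∃ H, H = Gᴴ + G + Gᴴ * G := ⟨_, rfl⟩
  have hHherm : Hᴴ = H := by
    rw [hH_def]
    simp only [Matrix.conjTranspose_add, Matrix.conjTranspose_mul,
      Matrix.conjTranspose_conjTranspose]
    abel
  have hG1 : ‖G‖ ≤ 1 := by
    have h24 : 1/(24*c^2) ≤ 1 := by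
      rw [div_le_one (by positivity)]; nlinarith
    linarith
  have hHnorm : ‖H‖ ≤ 3 * (a * η) := by
    have h1 : ‖H‖ ≤ ‖G‖ + ‖G‖ + ‖G‖ * ‖G‖ := by
      rw [hH_def]
      calc ‖Gᴴ + G + Gᴴ * G‖ ≤ ‖Gᴴ + G‖ + ‖Gᴴ * G‖ := norm_add_le _ _
        _ ≤ ‖Gᴴ‖ + ‖G‖ + ‖Gᴴ‖ * ‖G‖ := by
            have h2 := norm_add_le Gᴴ G
            have h3 := norm_mul_le Gᴴ G
            linarith
        _ = ‖G‖ + ‖G‖ + ‖G‖ * ‖G‖ := by rw [Matrix.l2_opNorm_conjTranspose]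
    nlinarith [norm_nonneg G]
  have hHsmall : ‖H‖ ≤ 1/(8*c^2) := by
    have h1 : (3:ℝ) * (1/(24*c^2)) = 1/(8*c^2) := by
      field_simp
      ring
    linarith
  obtain ⟨X, hXtri, hXnorm, hXeq⟩ := hchol H hHherm hHsmall
  have hXb : ‖X‖ ≤ 6*c*a*η := by
    have h1 : 2*c*‖H‖ ≤ 2*c*(3*(a*η)) := by nlinarith
    linarith
  have hXsmall : ‖X‖ ≤ 1/2 := by
    have h1 : 2*c*‖H‖ ≤ 2*c*(1/(8*c^2)) := by nlinarith [norm_nonneg H]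
    have h2 : 2*c*(1/(8*c^2)) = 1/(4*c) := by field_simp; ring
    have h3 : 1/(4*c) ≤ 1/2 := by
      rw [div_le_div_iff₀ (by positivity) (by norm_num)]; linarith
    linarith
  have hXlt1 : ‖-X‖ < 1 := by rw [norm_neg]; linarith
  obtain ⟨V, hV1, hV2⟩ :
      ∃ V : Matrix (Fin n) (Fin n) ℂ, (1 + X) * V = 1 ∧ V * (1 + X) = 1 := by
    have huval : ((Units.oneSub (-X) hXlt1 : (Matrix (Fin n) (Fin n) ℂ)ˣ) :
        Matrix (Fin n) (Fin n) ℂ) = 1 + X := sub_neg_eq_add 1 X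
    refine ⟨(((Units.oneSub (-X) hXlt1)⁻¹ : (Matrix (Fin n) (Fin n) ℂ)ˣ) :
        Matrix (Fin n) (Fin n) ℂ), ?_, ?_⟩
    · rw [← huval]; exact (Units.oneSub (-X) hXlt1).mul_inv
    · rw [← huval]; exact (Units.oneSub (-X) hXlt1).inv_mul
  have hone : ‖(1 : Matrix (Fin n) (Fin n) ℂ)‖ ≤ 1 := by
    rw [Matrix.cstar_norm_def, map_one]
    exact ContinuousLinearMap.norm_id_le
  have hVnorm : ‖V‖ ≤ 2 := by
    have hVeq : V = 1 - X * V := by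
      have h1 : (1 + X) * V = V + X * V := by noncomm_ring
      rw [h1] at hV1
      rw [eq_sub_iff_add_eq]
      exact hV1
    have h2 : ‖V‖ ≤ 1 + ‖X‖ * ‖V‖ := by
      calc ‖V‖ = ‖1 - X*V‖ := by rw [← hVeq]
        _ ≤ ‖(1: Matrix (Fin n) (Fin n) ℂ)‖ + ‖X*V‖ := norm_sub_le _ _
        _ ≤ 1 + ‖X‖*‖V‖ := by
            have h3 := norm_mul_le X V
            linarith
    nlinarith [norm_nonneg V]
  refine ⟨Q0 * ((1 + G) * V), (1 + X) * R0, ?_, ?_, ?_, ?_⟩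
  · rw [Matrix.mem_unitaryGroup_iff', Matrix.star_eq_conjTranspose]
    have hGH : (1 + G)ᴴ * (1 + G) = 1 + H := by
      rw [Matrix.conjTranspose_add, Matrix.conjTranspose_one, hH_def]
      noncomm_ring
    calc (Q0 * ((1+G)*V))ᴴ * (Q0 * ((1+G)*V))
        = ((1+G)*V)ᴴ * (Q0ᴴ * Q0) * ((1+G)*V) := by
          rw [Matrix.conjTranspose_mul]; noncomm_ring
      _ = ((1+G)*V)ᴴ * ((1+G)*V) := by rw [hQ0u, mul_one]
      _ = Vᴴ * ((1+G)ᴴ * (1+G)) * V := by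
          rw [Matrix.conjTranspose_mul]; noncomm_ring
      _ = Vᴴ * ((1+X)ᴴ * (1+X)) * V := by rw [hGH, hXeq]
      _ = ((1+X)*V)ᴴ * ((1+X)*V) := by
          rw [Matrix.conjTranspose_mul]; noncomm_ring
      _ = 1 := by rw [hV1, Matrix.conjTranspose_one, one_mul]
  · exact Matrix.BlockTriangular.mul (Matrix.blockTriangular_one.add hXtri) hR0
  · calc S = Q0 * (1 + G) * R0 := hSdecomp.symm
      _ = Q0 * ((1+G) * V) * ((1+X) * R0) := by
          have h1 : Q0 * ((1+G)*V) * ((1+X)*R0) = Q0 * ((1+G) * (V * (1+X))) * R0 := by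
            noncomm_ring
          rw [h1, hV2, mul_one]
  · have hQdiff : Q0 * ((1+G)*V) - Q0 = Q0 * ((G - X) * V) := by
      have h1 : (G - X) * V = (1+G)*V - (1+X)*V := by noncomm_ring
      rw [h1, hV1]
      noncomm_ring
    have hQb : ‖Q0 * ((1+G)*V) - Q0‖ ≤ ‖Q0‖ * ((a*η + 6*c*a*η) * 2) := by
      rw [hQdiff]
      calc ‖Q0 * ((G - X) * V)‖ ≤ ‖Q0‖ * ‖(G - X) * V‖ := norm_mul_le _ _
        _ ≤ ‖Q0‖ * ((a*η + 6*c*a*η) * 2) := by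
            have h1 : ‖(G - X) * V‖ ≤ (a*η + 6*c*a*η) * 2 := by
              calc ‖(G - X) * V‖ ≤ ‖G - X‖ * ‖V‖ := norm_mul_le _ _
                _ ≤ (a*η + 6*c*a*η) * 2 := by
                    have h2 := norm_sub_le G X
                    nlinarith [norm_nonneg (G - X), norm_nonneg V]
            nlinarith [norm_nonneg Q0, norm_nonneg ((G - X) * V)]
    have hRdiff : (1 + X) * R0 - R0 = X * R0 := by noncomm_ring
    have hRb : ‖(1 + X) * R0 - R0‖ ≤ 6*c*a*η * ‖R0‖ := by
      rw [hRdiff]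
      calc ‖X * R0‖ ≤ ‖X‖ * ‖R0‖ := norm_mul_le _ _
        _ ≤ 6*c*a*η * ‖R0‖ := by nlinarith [norm_nonneg R0]
    have hfin : ‖Q0‖ * ((a*η + 6*c*a*η) * 2) + 6*c*a*η * ‖R0‖ ≤
        ((2*a + 12*c*a) * ‖Q0‖ + 6*c*a*‖R0‖ + 1) * η := by
      nlinarith [norm_nonneg Q0, norm_nonneg R0]
    linarith
end
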